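/- arXiv:1204.6689 — 2 statements merged into one kernel-verified Lean document; each statement's English description precedes it below -/
import Mathlib

section
/- For any positive integer m and complex s with Re(s) > 1, ζ_m(s) · ∑_{n=1}^∞ (1 + e^{2πi/m})^{Ω(n)}/n^s = ζ(s), where ζ_m(s) = ∑_{n=1}^∞ (−e^{2πi/m})^{ω(n)}/n^s. -/
open Real Complex Filter

open scoped ArithmeticFunction.omega ArithmeticFunction.Omega ArithmeticFunction.zeta

/-!
For `‖z‖ ≤ 1` the coefficients `(-z)^ω(n)` and `(1 + z)^Ω(n)` are multiplicative and their
Dirichlet convolution is `ζ`: at a prime power `p^k` it is `(1 + z)^k - z ∑_{j<k} (1 + z)^j = 1`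
by the geometric sum. So the product of the two L-series is the L-series of `ζ` as soon as both
converge absolutely. For `(-z)^ω` this is clear. The coefficient `(1 + z)^Ω` is completely
multiplicative with `‖1 + z‖ ≤ 2 < 2^σ ≤ p^σ` (`σ = Re s > 1`), so the partial sums of its
absolute series are bounded by the Euler products `∏_{p<N} (1 - ‖1 + z‖ p^{-σ})⁻¹`, and these by
`exp (C ∑_p p^{-σ})`.
-/

theorem inv_one_sub_le_exp_div_one_sub {x q : ℝ} (hx : 0 ≤ x) (hxq : x ≤ q) (hq : q < 1) :
    (1 - x)⁻¹ ≤ Real.exp (x / (1 - q)) := by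
  have hx1 : 0 < 1 - x := by linarith
  calc (1 - x)⁻¹ = 1 + x / (1 - x) := by field_simp; ring
    _ ≤ 1 + x / (1 - q) := by gcongr
    _ ≤ Real.exp (x / (1 - q)) := by linarith [Real.add_one_le_exp (x / (1 - q))]

theorem sum_range_le_prod_primesBelow_inv_one_sub {f : ℕ →*₀ ℝ} (hf : ∀ n, 0 ≤ f n)
    (hf1 : ∀ p, p.Prime → f p < 1) (N : ℕ) :
    ∑ n ∈ Finset.range N, f n ≤ ∏ p ∈ N.primesBelow, (1 - f p)⁻¹ := by
  have hsum := (EulerProduct.summable_and_hasSum_smoothNumbers_prod_primesBelow_geometric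
    (f := (f : ℕ →* ℝ))
    (fun hp ↦ by rw [MonoidHom.coe_coe, Real.norm_of_nonneg (hf _)]; exact hf1 _ hp) N).2
  replace hsum : HasSum (N.smoothNumbers.indicator f) _ := hasSum_subtype_iff_indicator.1 hsum
  calc ∑ n ∈ Finset.range N, f n = ∑ n ∈ Finset.range N, N.smoothNumbers.indicator f n := by
        refine Finset.sum_congr rfl fun n hn ↦ ?_
        rcases eq_or_ne n 0 with rfl | hn0
        · simp [Set.indicator_apply]
        · rw [Set.indicator_of_mem
            (Nat.mem_smoothNumbers_of_lt (Nat.pos_of_ne_zero hn0) (Finset.mem_range.1 hn))]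
    _ ≤ _ := sum_le_hasSum _ (fun n _ ↦ Set.indicator_nonneg (fun n _ ↦ hf n) n) hsum

theorem summable_of_map_prime_le {f : ℕ →*₀ ℝ} (hf : ∀ n, 0 ≤ f n) {q : ℝ} (hq : q < 1)
    (hfq : ∀ p, p.Prime → f p ≤ q) (hsum : Summable fun p : Nat.Primes ↦ f p) :
    Summable f := by
  refine summable_of_sum_range_le hf (c := Real.exp ((∑' p : Nat.Primes, f p) / (1 - q)))
    fun N ↦ ?_
  calc ∑ n ∈ Finset.range N, f n ≤ ∏ p ∈ N.primesBelow, (1 - f p)⁻¹ :=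
        sum_range_le_prod_primesBelow_inv_one_sub hf (fun p hp ↦ (hfq p hp).trans_lt hq) N
    _ ≤ ∏ p ∈ N.primesBelow, Real.exp (f p / (1 - q)) := by
        refine Finset.prod_le_prod (fun p hp ↦ ?_) (fun p hp ↦ ?_)
        · exact inv_nonneg.2 (by linarith [hfq p (Nat.prime_of_mem_primesBelow hp)])
        · exact inv_one_sub_le_exp_div_one_sub (hf p)
            (hfq p (Nat.prime_of_mem_primesBelow hp)) hq
    _ = Real.exp ((∑ p ∈ N.primesBelow, f p) / (1 - q)) := by
        rw [← Real.exp_sum, Finset.sum_div]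
    _ ≤ Real.exp ((∑' p : Nat.Primes, f p) / (1 - q)) := by
        gcongr
        rw [← Finset.sum_subtype_of_mem f (fun p hp ↦ Nat.prime_of_mem_primesBelow hp)]
        exact hsum.sum_le_tsum (ι := Nat.Primes) _ (fun p _ ↦ hf p)

theorem LSeries_eq_tsum_pnat (f : ℕ → ℂ) (s : ℂ) :
    LSeries f s = ∑' n : ℕ+, f n / ((n : ℕ) : ℂ) ^ s := by
  rw [LSeries, ← tsum_pnat_eq_tsum_of_eq_zero (LSeries.term_zero f s)]
  exact tsum_congr fun n ↦ LSeries.term_of_ne_zero n.ne_zero f s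

namespace ArithmeticFunction

theorem LSeriesSummable_of_apply_mul_of_norm_prime_le {f : ArithmeticFunction ℂ}
    (h1 : f 1 = 1) (hmul : ∀ m n, f (m * n) = f m * f n) {s : ℂ} (hs : 1 < s.re) {C : ℝ}
    (hC : C < 2 ^ s.re) (hfC : ∀ p, p.Prime → ‖f p‖ ≤ C) : LSeriesSummable f s := by
  let g : ℕ →*₀ ℝ :=
    { toFun n := ‖f n‖ / (n : ℝ) ^ s.re
      map_zero' := by simp
      map_one' := by simp [h1]
      map_mul' m n := by
        simp only [hmul, norm_mul, Nat.cast_mul, mul_rpow (Nat.cast_nonneg m) (Nat.cast_nonneg n),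
          mul_div_mul_comm] }
  have hg : ∀ n, 0 ≤ g n := fun n ↦ div_nonneg (norm_nonneg _) (by positivity)
  have hnorm : ∀ n, ‖LSeries.term f s n‖ = g n := fun n ↦ by
    rw [LSeries.norm_term_eq]
    split_ifs with hn
    · simp [g, hn]
    · rfl
  have hC0 : 0 ≤ C := (norm_nonneg _).trans (hfC 2 Nat.prime_two)
  have hgp : ∀ p, p.Prime → g p ≤ C * (p : ℝ) ^ (-s.re) := fun p hp ↦ by
    rw [rpow_neg (Nat.cast_nonneg p), ← div_eq_mul_inv]
    exact div_le_div_of_nonneg_right (hfC p hp) (by positivity)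
  refine .of_norm (.congr ?_ fun n ↦ (hnorm n).symm)
  refine summable_of_map_prime_le hg ((div_lt_one (by positivity)).2 hC) (fun p hp ↦ ?_) ?_
  · calc g p ≤ C * (p : ℝ) ^ (-s.re) := hgp p hp
      _ ≤ C * (2 : ℝ) ^ (-s.re) := mul_le_mul_of_nonneg_left
        (rpow_le_rpow_of_nonpos two_pos (by exact_mod_cast hp.two_le) (by linarith)) hC0
      _ = C / 2 ^ s.re := by rw [rpow_neg zero_le_two, div_eq_mul_inv]
  · exact ((Nat.Primes.summable_rpow.2 (by linarith)).mul_left C).of_nonneg_of_le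
      (fun p ↦ hg p) (fun p ↦ hgp p p.prop)

variable {R : Type*}

section MonoidWithZero

variable [MonoidWithZero R]

def powCardDistinctFactors (a : R) : ArithmeticFunction R where
  toFun n := if n = 0 then 0 else a ^ ω n
  map_zero' := if_pos rfl

def powCardFactors (a : R) : ArithmeticFunction R where
  toFun n := if n = 0 then 0 else a ^ Ω n
  map_zero' := if_pos rfl

theorem powCardDistinctFactors_apply (a : R) {n : ℕ} (hn : n ≠ 0) :
    powCardDistinctFactors a n = a ^ ω n :=
  if_neg hn

theorem powCardFactors_apply (a : R) {n : ℕ} (hn : n ≠ 0) : powCardFactors a n = a ^ Ω n :=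
  if_neg hn

theorem powCardFactors_apply_mul (a : R) (m n : ℕ) :
    powCardFactors a (m * n) = powCardFactors a m * powCardFactors a n := by
  rcases eq_or_ne m 0 with rfl | hm
  · simp
  rcases eq_or_ne n 0 with rfl | hn
  · simp
  simp [powCardFactors_apply, cardFactors_mul, hm, hn, pow_add]

theorem isMultiplicative_powCardDistinctFactors (a : R) :
    (powCardDistinctFactors a).IsMultiplicative :=
  IsMultiplicative.iff_ne_zero.2 ⟨by simp [powCardDistinctFactors_apply], fun hm hn hmn ↦ by
    simp [powCardDistinctFactors_apply, hm, hn, cardDistinctFactors_mul hmn, pow_add]⟩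

theorem isMultiplicative_powCardFactors (a : R) : (powCardFactors a).IsMultiplicative :=
  ⟨by simp [powCardFactors_apply], fun {m n} _ ↦ powCardFactors_apply_mul a m n⟩

end MonoidWithZero

theorem powCardDistinctFactors_neg_mul_powCardFactors_one_add [CommRing R] (a : R) :
    powCardDistinctFactors (-a) * powCardFactors (1 + a) = ζ := by
  refine (IsMultiplicative.eq_iff_eq_on_prime_powers _
    ((isMultiplicative_powCardDistinctFactors _).mul (isMultiplicative_powCardFactors _)) _
    isMultiplicative_zeta.natCast).2 fun p k hp ↦ ?_
  have hterm : ∀ i ∈ Finset.range k, powCardDistinctFactors (-a) (p ^ k / p ^ i) *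
      powCardFactors (1 + a) (p ^ i) = -a * (1 + a) ^ i := fun i hi ↦ by
    have hik : i < k := Finset.mem_range.1 hi
    rw [Nat.pow_div hik.le hp.pos, powCardDistinctFactors_apply _ (pow_ne_zero _ hp.ne_zero),
      powCardFactors_apply _ (pow_ne_zero _ hp.ne_zero),
      cardDistinctFactors_apply_prime_pow hp (Nat.sub_ne_zero_of_lt hik),
      cardFactors_apply_prime_pow hp, pow_one]
  rw [mul_apply, Nat.sum_divisorsAntidiagonal' (fun x y ↦ powCardDistinctFactors (-a) x *
    powCardFactors (1 + a) y), Nat.sum_divisors_prime_pow hp, Finset.sum_range_succ,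
    Finset.sum_congr rfl hterm, ← Finset.mul_sum, Nat.div_self (pow_pos hp.pos k),
    powCardDistinctFactors_apply _ one_ne_zero, cardDistinctFactors_one, pow_zero, one_mul,
    powCardFactors_apply _ (pow_ne_zero _ hp.ne_zero),
    cardFactors_apply_prime_pow hp, natCoe_apply, zeta_apply, if_neg (pow_ne_zero _ hp.ne_zero)]
  linear_combination -mul_geom_sum (1 + a) k

theorem LSeriesSummable_powCardDistinctFactors {a s : ℂ} (ha : ‖a‖ ≤ 1) (hs : 1 < s.re) :
    LSeriesSummable (powCardDistinctFactors a) s :=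
  LSeriesSummable_of_bounded_of_one_lt_re (m := 1) (fun n hn ↦ by
    rw [powCardDistinctFactors_apply a hn, norm_pow]
    exact pow_le_one₀ (norm_nonneg a) ha) hs

theorem LSeriesSummable_powCardFactors {a s : ℂ} (hs : 1 < s.re) (ha : ‖a‖ < 2 ^ s.re) :
    LSeriesSummable (powCardFactors a) s :=
  LSeriesSummable_of_apply_mul_of_norm_prime_le (by simp [powCardFactors_apply])
    (powCardFactors_apply_mul a) hs ha fun p hp ↦ by
      rw [powCardFactors_apply a hp.ne_zero, cardFactors_apply_prime hp, pow_one]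

theorem LSeries_powCardDistinctFactors_neg_mul_LSeries_powCardFactors_one_add {z : ℂ}
    (hz : ‖z‖ ≤ 1) {s : ℂ} (hs : 1 < s.re) :
    LSeries (powCardDistinctFactors (-z)) s * LSeries (powCardFactors (1 + z)) s =
      riemannZeta s := by
  have h2 : ‖1 + z‖ < 2 ^ s.re := calc
    ‖1 + z‖ ≤ 2 := (norm_add_le _ _).trans (by rw [norm_one]; linarith)
    _ = 2 ^ (1 : ℝ) := (rpow_one 2).symm
    _ < 2 ^ s.re := rpow_lt_rpow_of_exponent_lt one_lt_two hs
  rw [← LSeries_mul' (LSeriesSummable_powCardDistinctFactors (by rwa [norm_neg]) hs)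
    (LSeriesSummable_powCardFactors hs h2), powCardDistinctFactors_neg_mul_powCardFactors_one_add]
  exact LSeries_zeta_eq_riemannZeta hs

end ArithmeticFunction

theorem zeta_m_mul_series_eq_zeta_general (m : ℕ) (s : ℂ) (hs : 1 < s.re) :
    (∑' n : ℕ+, (-Complex.exp (2 * Real.pi * Complex.I / m)) ^
        (ArithmeticFunction.cardDistinctFactors (n : ℕ)) / ((n : ℕ) : ℂ) ^ s) *
      (∑' n : ℕ+, (1 + Complex.exp (2 * Real.pi * Complex.I / m)) ^
        (ArithmeticFunction.cardFactors (n : ℕ)) / ((n : ℕ) : ℂ) ^ s)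
    = riemannZeta s := by
  have hz : ‖Complex.exp (2 * Real.pi * Complex.I / m)‖ ≤ 1 := by
    rw [Complex.norm_exp]
    simp [Complex.div_re]
  rw [← ArithmeticFunction.LSeries_powCardDistinctFactors_neg_mul_LSeries_powCardFactors_one_add
    hz hs, LSeries_eq_tsum_pnat, LSeries_eq_tsum_pnat]
  simp only [ArithmeticFunction.powCardDistinctFactors_apply _ (PNat.ne_zero _),
    ArithmeticFunction.powCardFactors_apply _ (PNat.ne_zero _)]

theorem zeta_m_mul_series_eq_zeta (m : ℕ) (hm : 0 < m) (s : ℂ) (hs : 1 < s.re) :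
    (∑' n : ℕ+, (-Complex.exp (2 * Real.pi * Complex.I / m)) ^
        (ArithmeticFunction.cardDistinctFactors (n : ℕ)) / ((n : ℕ) : ℂ) ^ s) *
      (∑' n : ℕ+, (1 + Complex.exp (2 * Real.pi * Complex.I / m)) ^
        (ArithmeticFunction.cardFactors (n : ℕ)) / ((n : ℕ) : ℂ) ^ s)
    = riemannZeta s :=
  zeta_m_mul_series_eq_zeta_general m s hs
end

section
/- If ∑_{n ≤ x} λ(n)/n → 0 as x → ∞ (Landau's theorem), then ∑_{n=1}^∞ (−1)^{n−Ω(n)}/n = 0, i.e., the partial sums ∑_{n ≤ x} (−1)^{n−Ω(n)}/n tend to 0. -/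
/-!
Since `(-1)^(n - Ω n) = (-1)^n λ(n)` and `(-1)^n = 2·[2 ∣ n] - 1`, the sum up to `x` equals twice the
sum of `λ(n)/n` over even `n ≤ x`, minus `∑_{n ≤ x} λ(n)/n`. Complete multiplicativity gives
`λ(2m)/(2m) = -λ(m)/(2m)`, so the even part is `-∑_{m ≤ x/2} λ(m)/m`, and both pieces tend to `0`
by Landau's theorem.
-/

open Finset Filter ArithmeticFunction
open scoped ArithmeticFunction.Omega

lemma neg_one_zpow_natCast_sub {K : Type*} [DivisionRing K] (a b : ℕ) :
    (-1 : K) ^ ((a : ℤ) - b) = (-1) ^ a * (-1) ^ b := by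
  rw [zpow_sub₀ (neg_ne_zero.mpr one_ne_zero), zpow_natCast, zpow_natCast, div_eq_mul_inv,
    ← inv_pow, inv_neg_one]

lemma neg_one_pow_cardFactors_two_mul {R : Type*} [Ring R] {m : ℕ} (hm : m ≠ 0) :
    (-1 : R) ^ Ω (2 * m) = -(-1) ^ Ω m := by
  rw [cardFactors_mul two_ne_zero hm, cardFactors_apply_prime Nat.prime_two, pow_add, pow_one,
    neg_one_mul]

lemma filter_even_Icc_one (N : ℕ) :
    (Icc 1 N).filter Even = (Icc 1 (N / 2)).map ⟨(2 * ·), mul_right_injective₀ two_ne_zero⟩ := by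
  ext n
  simp only [mem_filter, mem_Icc, Finset.mem_map, Function.Embedding.coeFn_mk, Nat.even_iff]
  constructor
  · rintro ⟨⟨h1, hN⟩, h2⟩
    exact ⟨n / 2, ⟨by omega, by omega⟩, by omega⟩
  · rintro ⟨m, ⟨h1, hN⟩, rfl⟩
    omega

lemma sum_Icc_neg_one_pow_mul {R : Type*} [CommRing R] (f : ℕ → R) (N : ℕ) :
    ∑ n ∈ Icc 1 N, (-1) ^ n * f n = 2 * ∑ m ∈ Icc 1 (N / 2), f (2 * m) - ∑ n ∈ Icc 1 N, f n := by
  have hsign (n : ℕ) : (-1) ^ n * f n = (if Even n then 2 * f n else 0) - f n := by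
    rcases n.even_or_odd with hn | hn
    · rw [hn.neg_one_pow, if_pos hn]; ring
    · rw [hn.neg_one_pow, if_neg (Nat.not_even_iff_odd.mpr hn)]; ring
  simp_rw [hsign, sum_sub_distrib, ← sum_filter, filter_even_Icc_one, sum_map, ← mul_sum]
  rfl

lemma sum_Icc_neg_one_zpow_sub_cardFactors_div {K : Type*} [Field K] [CharZero K] (N : ℕ) :
    ∑ n ∈ Icc 1 N, (-1 : K) ^ ((n : ℤ) - Ω n) / n =
      -∑ n ∈ Icc 1 (N / 2), (-1 : K) ^ Ω n / n - ∑ n ∈ Icc 1 N, (-1 : K) ^ Ω n / n := by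
  simp_rw [neg_one_zpow_natCast_sub, mul_div_assoc]
  rw [sum_Icc_neg_one_pow_mul, mul_sum, ← sum_neg_distrib]
  congr 1
  refine sum_congr rfl fun m hm ↦ ?_
  have hm0 : (m : K) ≠ 0 := Nat.cast_ne_zero.mpr (by grind)
  rw [neg_one_pow_cardFactors_two_mul (by grind), Nat.cast_mul, Nat.cast_two]
  field_simp

lemma Filter.Tendsto.comp_natFloor_div {α : Type*} {F : ℕ → α} {l : Filter α} {d : ℕ}
    (h : Tendsto (fun x : ℝ ↦ F ⌊x⌋₊) atTop l) (hd : 0 < d) :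
    Tendsto (fun x : ℝ ↦ F (⌊x⌋₊ / d)) atTop l := by
  simpa only [Function.comp_def, id_eq, Nat.floor_div_natCast] using
    h.comp (tendsto_id.atTop_div_const (Nat.cast_pos.mpr hd))

theorem T_tendsto_zero
    (h : Filter.Tendsto
      (fun x : ℝ => ∑ n ∈ Finset.Icc 1 ⌊x⌋₊,
        (-1 : ℝ) ^ (ArithmeticFunction.cardFactors n) / n) Filter.atTop (nhds 0)) :
    Filter.Tendsto
      (fun x : ℝ => ∑ n ∈ Finset.Icc 1 ⌊x⌋₊,
        (-1 : ℝ) ^ ((n : ℤ) - (ArithmeticFunction.cardFactors n : ℤ)) / n)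
      Filter.atTop (nhds 0) := by
  have h_half := Tendsto.comp_natFloor_div (F := fun N ↦ ∑ n ∈ Icc 1 N, (-1 : ℝ) ^ Ω n / n)
    h two_pos
  simp_rw [sum_Icc_neg_one_zpow_sub_cardFactors_div]
  simpa only [neg_zero, sub_zero] using h_half.neg.sub h
end
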